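/- arXiv:2209.05602 — 2 statements merged into one kernel-verified Lean document; each statement's English description precedes it below -/
import Mathlib

section
/- Fix a two-player complete-information game G with a blatantly unfair equilibrium whose firm strategy is a pure action a₀ ∈ D, where D is finite or a real interval. Suppose F₁ : D × Y → Z satisfies: for all labels y and all z in the common image Z there is d ∈ D with F₁(d, y) = z. Then there exists a classifier g : X → D that is simultaneously (F₁, F₂)-group fair (for any F₂) with respect to any sensitive attribute A and any distribution on X, and blatantly unfair (i.e., g(x₀) = a₀ for some x₀ ∈ X, so g is played at a blatantly unfair equilibrium in G). -/
open MeasureTheory ProbabilityTheory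

/-- **Proposition 3, part (1).** Fix a two-player complete-information game with a
blatantly unfair equilibrium whose firm strategy is a pure action `a₀ ∈ D`, where
`D ⊆ ℝ` is finite or a real interval (here: equilibria are abstracted by the predicate
`Eqm` on firm pure strategies with resulting payoffs `payf` to the firm and `payc` to
the candidate; blatant unfairness means the candidate's payoff at `a₀` is non-positive,
while some other equilibrium gives both players positive payoffs).  Suppose
`F₁ : D × 𝒴 → Z` is such that for every label `y` and every `z` in the common image
there is `d ∈ D` with `F₁ d y = z`.  Then there is a classifier `g : X → D` that is
blatantly unfair (`g x₀ = a₀` for some `x₀`, so `g` is played at the blatantly unfair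
equilibrium) whose `F₁`-value is constant, and which is therefore `(F₁, F₂)`-group fair
for every `F₂`, every sensitive attribute `A`, and every distribution on `X`. -/
theorem group_fair_yet_blatantly_unfair_classifier
    {X 𝒴 Z : Type*} [MeasurableSpace X] [Nonempty X]
    (D : Set ℝ) (hD : D.Finite ∨ D.OrdConnected)
    (Eqm : D → Prop) (payf payc : D → ℝ)
    (a₀ : D)
    (hBlatant : Eqm a₀ ∧ payc a₀ ≤ 0 ∧ ∃ a' : D, Eqm a' ∧ payc a' > 0 ∧ payf a' > 0)
    (F₁ : D → 𝒴 → Z)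
    (hsurj : ∀ (y : 𝒴) (z : Z), ∃ d : D, F₁ d y = z)
    (Y : X → 𝒴) :
    ∃ g : X → D,
      -- g is blatantly unfair: some individual is assigned the firm's strategy a₀
      (∃ x₀ : X, g x₀ = a₀)
      -- the F₁-value of g is constant
      ∧ (∃ z₀ : Z, ∀ x : X, F₁ (g x) (Y x) = z₀)
      -- hence g is (F₁,F₂)-group fair for any F₂, any A, and any distribution on X
      ∧ (∀ {𝒜 Z₂ : Type} (μ : Measure X), IsProbabilityMeasure μ →
          ∀ (A : X → 𝒜) (F₂ : D → 𝒴 → Z₂) (a : 𝒜) (z : Z) (z₂ : Z₂),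
            μ ({x | A x = a} ∩ {x | F₂ (g x) (Y x) = z₂}) ≠ 0 →
            μ {x | F₂ (g x) (Y x) = z₂} ≠ 0 →
            (μ[|{x | A x = a} ∩ {x | F₂ (g x) (Y x) = z₂}]) {x | F₁ (g x) (Y x) = z}
              = (μ[|{x | F₂ (g x) (Y x) = z₂}]) {x | F₁ (g x) (Y x) = z}) := by
  classical
  obtain ⟨x₀⟩ := ‹Nonempty X›
  set z₀ : Z := F₁ a₀ (Y x₀) with hz₀
  refine ⟨fun x => if Y x = Y x₀ then a₀ else Classical.choose (hsurj (Y x) z₀),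
    ⟨x₀, by simp⟩, ⟨z₀, ?_⟩, ?_⟩
  · intro x
    by_cases h : Y x = Y x₀
    · simp [h, hz₀]
    · simpa [h] using Classical.choose_spec (hsurj (Y x) z₀)
  · intro 𝒜 Z₂ μ hμ A F₂ a z z₂ h1 h2
    have hconst : ∀ x : X,
        F₁ ((fun x => if Y x = Y x₀ then a₀ else Classical.choose (hsurj (Y x) z₀)) x) (Y x) = z₀ := by
      intro x
      by_cases h : Y x = Y x₀
      · simp [h, hz₀]
      · simpa [h] using Classical.choose_spec (hsurj (Y x) z₀)
    by_cases hz : z = z₀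
    · have hset : {x : X | F₁ ((fun x => if Y x = Y x₀ then a₀ else Classical.choose (hsurj (Y x) z₀)) x) (Y x) = z} = Set.univ := by
        ext x; simp [hconst x, hz]
      rw [hset]
      have c1 : IsProbabilityMeasure (μ[|{x | A x = a} ∩ {x | F₂ ((fun x => if Y x = Y x₀ then a₀ else Classical.choose (hsurj (Y x) z₀)) x) (Y x) = z₂}]) :=
        cond_isProbabilityMeasure h1
      have c2 : IsProbabilityMeasure (μ[|{x | F₂ ((fun x => if Y x = Y x₀ then a₀ else Classical.choose (hsurj (Y x) z₀)) x) (Y x) = z₂}]) :=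
        cond_isProbabilityMeasure h2
      rw [c1.measure_univ, c2.measure_univ]
    · have hset : {x : X | F₁ ((fun x => if Y x = Y x₀ then a₀ else Classical.choose (hsurj (Y x) z₀)) x) (Y x) = z} = ∅ := by
        ext x; simp [hconst x, Ne.symm hz]
      rw [hset]
      simp
end

section
/- In the game M_{x,f}, under beliefs with o_f(f) < o_f(x) and o_f(f) ≥ o_x(x), the strategy profile in which the firm offers w = o_f(f) and the candidate accepts is a self-confirming equilibrium (witnessed by the firm believing the candidate accepts any offer w ≥ 0 and the candidate correctly believing the firm offers o_f(f)), even though the firm's own beliefs imply the offer is below what it believes the candidate's outside option to be. -/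
/-- Firm's believed expected utility from offering `w`, given a believed acceptance rule
`B` for the candidate and a believed own expected outside option `o_ff`. -/
noncomputable def firmBelievedUtilityWith (B : ℝ → Bool) (o_ff w : ℝ) : ℝ :=
  if B w then 2 - w else 2 - o_ff

/-- **The "unrealistic" SCE.** In the game `M_{x,f}`, under beliefs with
`o_f(f) < o_f(x)` and `o_f(f) ≥ o_x(x)`, the strategy profile in which the firm offers
`w = o_f(f)` and the candidate accepts is a self-confirming equilibrium: there is a
believed acceptance rule for the firm that accepts the realized offer `o_f(f)` (so the
firm's belief is correct on the reached information set), under which offering `o_f(f)`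
maximizes the firm's believed expected utility over `[0,3]`, and the candidate — who
correctly believes the firm offers `o_f(f)` — maximizes believed utility by accepting
(`o_f(f) - 1 ≥ o_x(x) - 1`); this even though the firm's own beliefs imply the offer is
below what it believes the candidate's outside option to be (`o_f(f) < o_f(x)`). -/
theorem unrealistic_sce
    (o_ff o_fx o_xx : ℝ)
    (h_ff : o_ff ∈ Set.Icc (0:ℝ) 3) (h_fx : o_fx ∈ Set.Icc (0:ℝ) 3)
    (h_xx : o_xx ∈ Set.Icc (0:ℝ) 3)
    (h1 : o_ff < o_fx) (h2 : o_ff ≥ o_xx) :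
    ∃ B : ℝ → Bool,
      B o_ff = true
      ∧ (∀ w ∈ Set.Icc (0:ℝ) 3,
          firmBelievedUtilityWith B o_ff o_ff ≥ firmBelievedUtilityWith B o_ff w)
      ∧ (o_ff - 1 ≥ o_xx - 1)
      ∧ o_ff < o_fx := by
  refine ⟨fun w => decide (o_ff ≤ w), by simp, ?_, by linarith, h1⟩
  intro w hw
  unfold firmBelievedUtilityWith
  simp only [decide_eq_true_eq, le_refl, if_true]
  split <;> linarith
end
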